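/- The subcomplex of B(S^n ∨ S^m) in component-bigrading (1,1) with the S^n-component occurring first is isomorphic as a chain complex to the tensor product B(S^n) ⊗ B(S^m). -/

import Mathlib

noncomputable section

/-- A (non-negatively) graded algebra-with-differential data, used to model
cochain algebras `C^*(X)` with cup product. -/
structure GDGA where
  R : ℕ → Type
  grp : ∀ i, AddCommGroup (R i)
  mul : ∀ {i j : ℕ}, R i → R j → R (i + j)
  d : ∀ {i : ℕ}, R i → R (i + 1)

attribute [instance] GDGA.grp

namespace GDGA

variable (A : GDGA)

/-- Transport along an equality of degrees. -/
def tr {i j : ℕ} (h : i = j) : A.R i → A.R j := fun x => h ▸ x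

/-- The homogeneous elements of positive degree (the generators of the bar complex);
`⟨i, x⟩` records an element `x` of degree `i+1`, so `i` is the *shifted* degree. -/
abbrev Elt := Σ i : ℕ, A.R (i + 1)

/-- The underlying group of the bar complex `B(A)`: formal ℤ-linear combinations of
bar monomials `x₁|⋯|x_k` (encoded as lists of homogeneous positive-degree elements). -/
abbrev Bar := (List A.Elt) →₀ ℤ

/-- The bar monomial `x₁|⋯|x_k` as an element of the bar complex. -/
def bar (l : List A.Elt) : A.Bar := Finsupp.single l 1

/-- The total (shifted) degree of a bar monomial: internal degree minus weight. -/
def sdeg (l : List A.Elt) : ℕ := (l.map (fun x => x.1)).sum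

/-- The internal differential on a bar monomial (with Koszul signs). -/
def dRList : List A.Elt → A.Bar
  | [] => 0
  | x :: xs =>
      Finsupp.single ((⟨x.1 + 1, A.d x.2⟩ : A.Elt) :: xs) 1
        + ((-1 : ℤ) ^ x.1) • Finsupp.mapDomain (List.cons x) (dRList xs)

/-- The external (bar) differential on a bar monomial: remove a bar and multiply,
with Koszul signs. -/
def dMList : List A.Elt → A.Bar
  | [] => 0
  | [_] => 0
  | x :: y :: xs =>
      ((-1 : ℤ) ^ x.1) •
          Finsupp.single
            ((⟨x.1 + y.1 + 1, A.tr (by omega) (A.mul x.2 y.2)⟩ : A.Elt) :: xs) 1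
        + ((-1 : ℤ) ^ x.1) • Finsupp.mapDomain (List.cons x) (dMList (y :: xs))

/-- The internal differential `d_R` of the bar complex. -/
def dR : A.Bar →ₗ[ℤ] A.Bar := Finsupp.lift A.Bar ℤ (List A.Elt) A.dRList

/-- The external differential `d_μ` of the bar complex. -/
def dM : A.Bar →ₗ[ℤ] A.Bar := Finsupp.lift A.Bar ℤ (List A.Elt) A.dMList

/-- The total differential `d_B = d_R + d_μ` of the bar complex. -/
def dB : A.Bar →ₗ[ℤ] A.Bar := A.dR + A.dM

/-- An element of the bar complex is homogeneous of total degree `m` if every bar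
monomial in its support has total degree `m`. -/
def Homog (b : A.Bar) (m : ℕ) : Prop := ∀ l ∈ b.support, A.sdeg l = m

/-- Two elements of the bar complex are cohomologous. -/
def Cohomologous (b b' : A.Bar) : Prop := ∃ c : A.Bar, b - b' = A.dB c

/-- The axioms making a `GDGA` an honest associative differential graded algebra. -/
structure IsDGA (A : GDGA) : Prop where
  d_add : ∀ {i : ℕ} (x y : A.R i), A.d (x + y) = A.d x + A.d y
  d_d : ∀ {i : ℕ} (x : A.R i), A.d (A.d x) = 0
  mul_add : ∀ {i j : ℕ} (x : A.R i) (y z : A.R j), A.mul x (y + z) = A.mul x y + A.mul x z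
  add_mul : ∀ {i j : ℕ} (x y : A.R i) (z : A.R j), A.mul (x + y) z = A.mul x z + A.mul y z
  assoc : ∀ {i j k : ℕ} (x : A.R i) (y : A.R j) (z : A.R k),
    HEq (A.mul (A.mul x y) z) (A.mul x (A.mul y z))
  leibniz : ∀ {i j : ℕ} (x : A.R i) (y : A.R j),
    A.d (A.mul x y)
      = A.tr (by omega) (A.mul (A.d x) y)
        + ((-1 : ℤ) ^ i) • A.tr (by omega) (A.mul x (A.d y))

end GDGA

/-- A morphism of graded differential algebras (e.g. `f^* : C^*(X) → C^*(Y)`). -/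
structure GDGAHom (A B : GDGA) where
  F : ∀ {i : ℕ}, A.R i → B.R i
  map_add : ∀ {i : ℕ} (x y : A.R i), F (x + y) = F x + F y
  map_d : ∀ {i : ℕ} (x : A.R i), F (A.d x) = B.d (F x)
  map_mul : ∀ {i j : ℕ} (x : A.R i) (y : A.R j), F (A.mul x y) = B.mul (F x) (F y)

namespace GDGAHom

/-- Composition of morphisms. -/
def comp {A B C : GDGA} (g : GDGAHom B C) (f : GDGAHom A B) : GDGAHom A C where
  F := fun x => g.F (f.F x)
  map_add := fun x y => by
    change g.F (f.F (x + y)) = g.F (f.F x) + g.F (f.F y)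
    rw [f.map_add, g.map_add]
  map_d := fun x => by
    change g.F (f.F (A.d x)) = C.d (g.F (f.F x))
    rw [f.map_d, g.map_d]
  map_mul := fun x y => by
    change g.F (f.F (A.mul x y)) = C.mul (g.F (f.F x)) (g.F (f.F y))
    rw [f.map_mul, g.map_mul]

/-- The induced map on bar complexes. -/
def barMap {A B : GDGA} (φ : GDGAHom A B) : A.Bar →ₗ[ℤ] B.Bar :=
  Finsupp.lift B.Bar ℤ (List A.Elt)
    (fun l => Finsupp.single (l.map (fun x => (⟨x.1, φ.F x.2⟩ : B.Elt))) 1)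

end GDGAHom

/-- An algebraic model of the cochains on the sphere `S^n`, together with
evaluation against the fundamental class. -/
structure SphereModel (n : ℕ) where
  A : GDGA
  isDGA : A.IsDGA
  /-- evaluation of an `n`-cochain on the fundamental class `[S^n]` -/
  integ : A.R n → ℤ
  integ_add : ∀ x y : A.R n, integ (x + y) = integ x + integ y
  /-- Stokes: exact cochains evaluate to zero -/
  integ_d : ∀ {i : ℕ} (z : A.R i) (h : i + 1 = n), integ (A.tr h (A.d z)) = 0
  /-- the reduced cohomology of `S^n` vanishes away from degree `n` -/
  acyclic : ∀ {i : ℕ} (x : A.R (i + 1)), i + 1 ≠ n → A.d x = 0 → ∃ y : A.R i, A.d y = x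
  /-- `∫` detects cohomology in degree `n`: a closed `n`-cochain of integral zero is exact -/
  nondeg : ∀ x : A.R n, A.d x = 0 → integ x = 0 →
    ∃ (i : ℕ) (h : i + 1 = n) (z : A.R i), A.tr h (A.d z) = x
theorem t : True := trivial

/-- The cochain model of a wedge `X ∨ Y`: reduced cochains split as a direct sum,
with componentwise differential and multiplication (so that cochains supported on
different wedge summands multiply to zero). -/
def GDGA.wedge (A B : GDGA) : GDGA where
  R := fun i => A.R i × B.R i
  grp := fun _ => inferInstance
  mul := fun x y => (A.mul x.1 y.1, B.mul x.2 y.2)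
  d := fun x => (A.d x.1, B.d x.2)

/-- The map of wedge models induced by a pair of maps (`(f ∨ g)^* = f^* + g^*`). -/
def GDGAHom.prod {A B C : GDGA} (f : GDGAHom A B) (g : GDGAHom A C) :
    GDGAHom A (B.wedge C) where
  F := fun x => (f.F x, g.F x)
  map_add := fun x y => by
    change (f.F (x + y), g.F (x + y)) = (f.F x + f.F y, g.F x + g.F y)
    rw [f.map_add, g.map_add]
  map_d := fun x => by
    change (f.F (A.d x), g.F (A.d x)) = (B.d (f.F x), C.d (g.F x))
    rw [f.map_d, g.map_d]
  map_mul := fun x y => by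
    change (f.F (A.mul x y), g.F (A.mul x y))
      = (B.mul (f.F x) (f.F y), C.mul (g.F x) (g.F y))
    rw [f.map_mul, g.map_mul]

namespace GDGA

variable (A : GDGA)

/-- The degenerate bar monomials: those containing an entry labeled by the zero
cochain.  (These are the monomials that vanish under the multilinearity relations
of the bar complex; we work modulo them.) -/
def Degenerate : Submodule ℤ A.Bar :=
  Submodule.span ℤ {z | ∃ l : List A.Elt, (∃ e ∈ l, e.2 = 0) ∧ z = A.bar l}

/-- Two elements of the bar complex are cohomologous (modulo the multilinearity
degeneracies). -/
def CohomologousD (b b' : A.Bar) : Prop :=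
  ∃ c : A.Bar, b - b' - A.dB c ∈ A.Degenerate

/-- A cocycle of the bar complex (modulo the multilinearity degeneracies). -/
def IsCocycleD (b : A.Bar) : Prop := A.dB b ∈ A.Degenerate

end GDGA


namespace Aux

open Finsupp

lemma lift_single {σ α : Type*} (f : α → (σ →₀ ℤ)) (a : α) :
    Finsupp.lift (σ →₀ ℤ) ℤ α f (Finsupp.single a (1 : ℤ)) = f a :=
  congrFun ((Finsupp.lift (σ →₀ ℤ) ℤ α).symm_apply_apply f) a

lemma lift_single' {σ α : Type*} (f : α → (σ →₀ ℤ)) (a : α) (b : ℤ) :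
    Finsupp.lift (σ →₀ ℤ) ℤ α f (Finsupp.single a b) = b • f a := by
  rw [show Finsupp.single a b = b • Finsupp.single a (1:ℤ) by
      rw [Finsupp.smul_single', mul_one],
    LinearMap.map_smul, lift_single]

lemma lift_mapDomain {σ α β : Type*}
    (f : β → (σ →₀ ℤ)) (g : α → β) (v : α →₀ ℤ) :
    Finsupp.lift (σ →₀ ℤ) ℤ β f (Finsupp.mapDomain g v)
      = Finsupp.lift (σ →₀ ℤ) ℤ α (fun a => f (g a)) v := by
  induction v using Finsupp.induction_linear with
  | zero => simp
  | add p q hp hq => rw [Finsupp.mapDomain_add, map_add, map_add, hp, hq]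
  | single a b => rw [Finsupp.mapDomain_single, lift_single', lift_single']

lemma lift_eq_mapDomain {α β : Type*} (F : α → β) (v : α →₀ ℤ) :
    Finsupp.lift (β →₀ ℤ) ℤ α (fun a => Finsupp.single (F a) (1:ℤ)) v
      = Finsupp.mapDomain F v := by
  induction v using Finsupp.induction_linear with
  | zero => simp
  | add p q hp hq => rw [Finsupp.mapDomain_add, map_add, hp, hq]
  | single a b =>
    rw [Finsupp.mapDomain_single, lift_single', Finsupp.smul_single', mul_one]

lemma mapDomain_comp' {α β γ : Type*} (f : α → β) (g : β → γ) (v : α →₀ ℤ) :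
    Finsupp.mapDomain g (Finsupp.mapDomain f v) = Finsupp.mapDomain (fun a => g (f a)) v :=
  (Finsupp.mapDomain_comp (f := f) (g := g)).symm

variable {A : GDGA}

lemma tr_zero (A : GDGA) {i j : ℕ} (h : i = j) : A.tr h (0 : A.R i) = 0 := by
  subst h; rfl

lemma d_zero (hA : A.IsDGA) {i : ℕ} : A.d (0 : A.R i) = 0 := by
  have h := hA.d_add (0 : A.R i) 0
  rw [add_zero] at h
  exact left_eq_add.mp h

lemma mul_zero' (hA : A.IsDGA) {i j : ℕ} (x : A.R i) : A.mul x (0 : A.R j) = 0 := by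
  have h := hA.mul_add x (0 : A.R j) 0
  rw [add_zero] at h
  exact left_eq_add.mp h

lemma zero_mul' (hA : A.IsDGA) {i j : ℕ} (z : A.R j) : A.mul (0 : A.R i) z = 0 := by
  have h := hA.add_mul (0 : A.R i) 0 z
  rw [add_zero] at h
  exact left_eq_add.mp h

lemma sdeg_cons (C : GDGA) (x : C.Elt) (l : List C.Elt) :
    C.sdeg (x :: l) = x.1 + C.sdeg l := by
  simp [GDGA.sdeg]

lemma dB_single (C : GDGA) (l : List C.Elt) :
    C.dB (Finsupp.single l (1:ℤ)) = C.dRList l + C.dMList l := by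
  simp only [GDGA.dB, LinearMap.add_apply, GDGA.dR, GDGA.dM, lift_single]

lemma mapDomain_sub' {α β : Type*} (f : α → β) (u v : α →₀ ℤ) :
    Finsupp.mapDomain f (u - v) = Finsupp.mapDomain f u - Finsupp.mapDomain f v := by
  have := map_sub (Finsupp.lmapDomain ℤ ℤ f) u v
  simpa [Finsupp.lmapDomain_apply] using this

lemma deg_single_mem (C : GDGA) {l : List C.Elt} (e : C.Elt) (he : e ∈ l) (h0 : e.2 = 0) :
    Finsupp.single l (1:ℤ) ∈ C.Degenerate :=
  Submodule.subset_span ⟨l, ⟨e, he, h0⟩, rfl⟩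

lemma deg_mapDomain (C : GDGA) (g : List C.Elt → List C.Elt)
    (hg : ∀ (l : List C.Elt) (e : C.Elt), e ∈ l → e ∈ g l) {v : C.Bar}
    (hv : v ∈ C.Degenerate) :
    Finsupp.mapDomain g v ∈ C.Degenerate := by
  induction hv using Submodule.span_induction with
  | mem x hx =>
    obtain ⟨l, ⟨e, he, h0⟩, rfl⟩ := hx
    rw [show C.bar l = Finsupp.single l (1:ℤ) from rfl, Finsupp.mapDomain_single]
    exact deg_single_mem C e (hg l e he) h0
  | zero => rw [Finsupp.mapDomain_zero]; exact Submodule.zero_mem _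
  | add x y _ _ hx hy => rw [Finsupp.mapDomain_add]; exact Submodule.add_mem _ hx hy
  | smul r x _ hx => rw [Finsupp.mapDomain_smul]; exact Submodule.smul_mem _ r hx

lemma dRList_append (C : GDGA) (l1 l2 : List C.Elt) :
    C.dRList (l1 ++ l2)
      = Finsupp.mapDomain (· ++ l2) (C.dRList l1)
        + ((-1:ℤ) ^ C.sdeg l1) • Finsupp.mapDomain (l1 ++ ·) (C.dRList l2) := by
  induction l1 with
  | nil =>
    show C.dRList l2 = Finsupp.mapDomain (· ++ l2) (C.dRList ([] : List C.Elt))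
      + ((-1:ℤ) ^ (0:ℕ)) • Finsupp.mapDomain (id : List C.Elt → List C.Elt) (C.dRList l2)
    rw [show C.dRList ([] : List C.Elt) = 0 from rfl, Finsupp.mapDomain_zero,
      Finsupp.mapDomain_id, pow_zero, one_smul, zero_add]
  | cons x t ih =>
    show C.dRList (x :: (t ++ l2)) = _
    simp only [GDGA.dRList, ih, Finsupp.mapDomain_add, Finsupp.mapDomain_smul,
      Finsupp.mapDomain_single, mapDomain_comp', sdeg_cons, pow_add, smul_add, smul_smul,
      List.cons_append]
    abel


lemma dMList_append (C : GDGA) (l2 : List C.Elt) : ∀ (l1 : List C.Elt),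
    (∀ x ∈ l1, ∀ y ∈ l2, ∀ (h : x.1 + 1 + (y.1 + 1) = x.1 + y.1 + 1 + 1),
      C.tr h (C.mul x.2 y.2) = 0) →
    C.dMList (l1 ++ l2)
      - Finsupp.mapDomain (· ++ l2) (C.dMList l1)
      - ((-1:ℤ) ^ C.sdeg l1) • Finsupp.mapDomain (l1 ++ ·) (C.dMList l2)
      ∈ C.Degenerate := by
  intro l1
  induction l1 with
  | nil =>
    intro _
    have : C.dMList ([] ++ l2)
        - Finsupp.mapDomain (· ++ l2) (C.dMList ([] : List C.Elt))
        - ((-1:ℤ) ^ C.sdeg ([] : List C.Elt)) • Finsupp.mapDomain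
            (((· ++ ·) ([] : List C.Elt)) : List C.Elt → List C.Elt) (C.dMList l2) = 0 := by
      show C.dMList l2 - Finsupp.mapDomain (· ++ l2) (0 : C.Bar)
        - ((-1:ℤ) ^ (0:ℕ)) • Finsupp.mapDomain (id : List C.Elt → List C.Elt) (C.dMList l2) = 0
      rw [Finsupp.mapDomain_zero, Finsupp.mapDomain_id, pow_zero, one_smul, sub_zero, sub_self]
    rw [this]
    exact Submodule.zero_mem _
  | cons x t ih =>
    intro h
    cases t with
    | nil =>
      cases l2 with
      | nil =>
        have : C.dMList ([x] ++ [])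
            - Finsupp.mapDomain (· ++ ([] : List C.Elt)) (C.dMList [x])
            - ((-1:ℤ) ^ C.sdeg [x]) • Finsupp.mapDomain ([x] ++ ·) (C.dMList ([] : List C.Elt))
            = 0 := by
          show (0 : C.Bar) - Finsupp.mapDomain _ (0 : C.Bar)
            - ((-1:ℤ) ^ C.sdeg [x]) • Finsupp.mapDomain _ (0 : C.Bar) = 0
          rw [Finsupp.mapDomain_zero, Finsupp.mapDomain_zero, smul_zero, sub_zero, sub_zero]
        rw [this]
        exact Submodule.zero_mem _
      | cons y ys =>
        have hxy := h x (by simp) y (by simp) (by omega)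
        have : C.dMList ([x] ++ (y :: ys))
            - Finsupp.mapDomain (· ++ (y :: ys)) (C.dMList [x])
            - ((-1:ℤ) ^ C.sdeg [x]) • Finsupp.mapDomain ([x] ++ ·) (C.dMList (y :: ys))
            = ((-1:ℤ) ^ x.1) • Finsupp.single
              ((⟨x.1 + y.1 + 1, (0 : C.R (x.1 + y.1 + 1 + 1))⟩ : C.Elt) :: ys) 1 := by
          show C.dMList (x :: y :: ys)
            - Finsupp.mapDomain (· ++ (y :: ys)) (0 : C.Bar)
            - ((-1:ℤ) ^ C.sdeg [x]) • Finsupp.mapDomain (List.cons x) (C.dMList (y :: ys)) = _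
          rw [GDGA.dMList, hxy, Finsupp.mapDomain_zero, sub_zero]
          have hs : C.sdeg [x] = x.1 := by simp [GDGA.sdeg]
          rw [hs]
          abel
        rw [this]
        exact Submodule.smul_mem _ _
          (deg_single_mem C (⟨x.1 + y.1 + 1, (0 : C.R (x.1 + y.1 + 1 + 1))⟩ : C.Elt)
            (by simp) rfl)
    | cons x' xs =>
      have ih' := ih (fun a ha y hy hh => h a (List.mem_cons_of_mem x ha) y hy hh)
      have key : C.dMList ((x :: x' :: xs) ++ l2)
          - Finsupp.mapDomain (· ++ l2) (C.dMList (x :: x' :: xs))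
          - ((-1:ℤ) ^ C.sdeg (x :: x' :: xs)) •
              Finsupp.mapDomain ((x :: x' :: xs) ++ ·) (C.dMList l2)
          = ((-1:ℤ) ^ x.1) • Finsupp.mapDomain (List.cons x)
              (C.dMList ((x' :: xs) ++ l2)
                - Finsupp.mapDomain (· ++ l2) (C.dMList (x' :: xs))
                - ((-1:ℤ) ^ C.sdeg (x' :: xs)) •
                    Finsupp.mapDomain ((x' :: xs) ++ ·) (C.dMList l2)) := by
        show C.dMList (x :: x' :: (xs ++ l2)) - _ - _ = _
        simp only [GDGA.dMList, mapDomain_sub', Finsupp.mapDomain_add, Finsupp.mapDomain_smul,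
          Finsupp.mapDomain_single, mapDomain_comp', sdeg_cons, pow_add, smul_add, smul_sub,
          smul_smul, List.cons_append]
        abel
      rw [key]
      exact Submodule.smul_mem _ _
        (deg_mapDomain C (List.cons x) (fun l e he => by simp [he]) ih')


end Aux

section Eleven

variable (A B : GDGA)

/-- Inclusion of an `S^n`-supported entry into the wedge. -/
def inlE (x : A.Elt) : (A.wedge B).Elt := ⟨x.1, (x.2, 0)⟩

/-- Inclusion of an `S^m`-supported entry into the wedge. -/
def inrE (x : B.Elt) : (A.wedge B).Elt := ⟨x.1, (0, x.2)⟩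

/-- Concatenation `B(S^n) ⊗ B(S^m) → B(S^n ∨ S^m)`,
`(a₁|⋯|a_p) ⊗ (b₁|⋯|b_q) ↦ a₁|⋯|a_p|b₁|⋯|b_q`. -/
def concatMap : ((List A.Elt × List B.Elt) →₀ ℤ) →ₗ[ℤ] (A.wedge B).Bar :=
  Finsupp.lift _ ℤ _
    (fun p => (A.wedge B).bar ((p.1.map (inlE A B)) ++ (p.2.map (inrE A B))))

/-- The differential of the tensor product complex `B(S^n) ⊗ B(S^m)`. -/
def dTensor : ((List A.Elt × List B.Elt) →₀ ℤ) →ₗ[ℤ] ((List A.Elt × List B.Elt) →₀ ℤ) :=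
  Finsupp.lift _ ℤ _ (fun p =>
    Finsupp.mapDomain (fun l => (l, p.2)) (A.dB (A.bar p.1))
      + ((-1 : ℤ) ^ A.sdeg p.1) •
        Finsupp.mapDomain (fun l => (p.1, l)) (B.dB (B.bar p.2)))

/-- The bar monomials of the wedge in component-bigrading `(1,1)` with the
`S^n`-component occurring first. -/
def AFirst11 : Set (List (A.wedge B).Elt) :=
  {l | ∃ la lb, l = la ++ lb ∧ la ≠ [] ∧ lb ≠ [] ∧
    (∀ x ∈ la, x.2.2 = 0 ∧ x.2.1 ≠ 0) ∧ (∀ x ∈ lb, x.2.1 = 0 ∧ x.2.2 ≠ 0)}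

open Aux

lemma inlE_fst (a : A.Elt) : (inlE A B a).1 = a.1 := rfl
lemma inrE_fst (b : B.Elt) : (inrE A B b).1 = b.1 := rfl

lemma wedge_tr {i j : ℕ} (h : i = j) (x : A.R i) (y : B.R i) :
    (A.wedge B).tr h ((x, y) : (A.wedge B).R i) = (A.tr h x, B.tr h y) := by
  subst h; rfl

lemma sdeg_map_inl (la : List A.Elt) :
    (A.wedge B).sdeg (la.map (inlE A B)) = A.sdeg la := by
  simp only [GDGA.sdeg, List.map_map]
  rfl

lemma dRList_inl (hB : B.IsDGA) (la : List A.Elt) :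
    (A.wedge B).dRList (la.map (inlE A B))
      = Finsupp.mapDomain (List.map (inlE A B)) (A.dRList la) := by
  induction la with
  | nil => simp [GDGA.dRList]
  | cons a t ih =>
    have hent : (⟨a.1 + 1, (A.wedge B).d (inlE A B a).2⟩ : (A.wedge B).Elt)
        = inlE A B ⟨a.1 + 1, A.d a.2⟩ := by
      show (⟨a.1 + 1, ((A.d a.2, B.d 0) : (A.wedge B).R (a.1 + 1 + 1))⟩ : (A.wedge B).Elt) = _
      rw [d_zero hB]
      rfl
    show (A.wedge B).dRList (inlE A B a :: t.map (inlE A B)) = _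
    simp only [GDGA.dRList, ih, Finsupp.mapDomain_add, Finsupp.mapDomain_single,
      Finsupp.mapDomain_smul, mapDomain_comp', List.map_cons, hent, inlE_fst]

lemma dRList_inr (hA : A.IsDGA) (lb : List B.Elt) :
    (A.wedge B).dRList (lb.map (inrE A B))
      = Finsupp.mapDomain (List.map (inrE A B)) (B.dRList lb) := by
  induction lb with
  | nil => simp [GDGA.dRList]
  | cons b t ih =>
    have hent : (⟨b.1 + 1, (A.wedge B).d (inrE A B b).2⟩ : (A.wedge B).Elt)
        = inrE A B ⟨b.1 + 1, B.d b.2⟩ := by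
      show (⟨b.1 + 1, ((A.d 0, B.d b.2) : (A.wedge B).R (b.1 + 1 + 1))⟩ : (A.wedge B).Elt) = _
      rw [d_zero hA]
      rfl
    show (A.wedge B).dRList (inrE A B b :: t.map (inrE A B)) = _
    simp only [GDGA.dRList, ih, Finsupp.mapDomain_add, Finsupp.mapDomain_single,
      Finsupp.mapDomain_smul, mapDomain_comp', List.map_cons, hent, inrE_fst]

lemma dMList_inl (hA : A.IsDGA) (hB : B.IsDGA) (la : List A.Elt) :
    (A.wedge B).dMList (la.map (inlE A B))
      = Finsupp.mapDomain (List.map (inlE A B)) (A.dMList la) := by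
  induction la with
  | nil => simp [GDGA.dMList]
  | cons a t ih =>
    cases t with
    | nil => simp [GDGA.dMList]
    | cons a' xs =>
      have hent : ∀ (h : a.1 + 1 + (a'.1 + 1) = a.1 + a'.1 + 1 + 1),
          (⟨a.1 + a'.1 + 1,
            (A.wedge B).tr h ((A.wedge B).mul (inlE A B a).2 (inlE A B a').2)⟩
              : (A.wedge B).Elt)
          = inlE A B ⟨a.1 + a'.1 + 1, A.tr h (A.mul a.2 a'.2)⟩ := by
        intro h
        show (⟨a.1 + a'.1 + 1, (A.wedge B).tr h
          ((A.mul a.2 a'.2, B.mul (0 : B.R (a.1 + 1)) (0 : B.R (a'.1 + 1)))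
            : (A.wedge B).R (a.1 + 1 + (a'.1 + 1)))⟩ : (A.wedge B).Elt) = _
        rw [mul_zero' hB, wedge_tr, tr_zero]
        rfl
      simp only [List.map_cons] at ih
      show (A.wedge B).dMList (inlE A B a :: inlE A B a' :: xs.map (inlE A B)) = _
      simp only [GDGA.dMList, ih, Finsupp.mapDomain_add, Finsupp.mapDomain_single,
        Finsupp.mapDomain_smul, mapDomain_comp', List.map_cons, inlE_fst, hent]
      erw [hent]

lemma dMList_inr (hA : A.IsDGA) (hB : B.IsDGA) (lb : List B.Elt) :
    (A.wedge B).dMList (lb.map (inrE A B))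
      = Finsupp.mapDomain (List.map (inrE A B)) (B.dMList lb) := by
  induction lb with
  | nil => simp [GDGA.dMList]
  | cons b t ih =>
    cases t with
    | nil => simp [GDGA.dMList]
    | cons b' xs =>
      have hent : ∀ (h : b.1 + 1 + (b'.1 + 1) = b.1 + b'.1 + 1 + 1),
          (⟨b.1 + b'.1 + 1,
            (A.wedge B).tr h ((A.wedge B).mul (inrE A B b).2 (inrE A B b').2)⟩
              : (A.wedge B).Elt)
          = inrE A B ⟨b.1 + b'.1 + 1, B.tr h (B.mul b.2 b'.2)⟩ := by
        intro h
        show (⟨b.1 + b'.1 + 1, (A.wedge B).tr h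
          ((A.mul (0 : A.R (b.1 + 1)) (0 : A.R (b'.1 + 1)), B.mul b.2 b'.2)
            : (A.wedge B).R (b.1 + 1 + (b'.1 + 1)))⟩ : (A.wedge B).Elt) = _
        rw [mul_zero' hA, wedge_tr, tr_zero]
        rfl
      simp only [List.map_cons] at ih
      show (A.wedge B).dMList (inrE A B b :: inrE A B b' :: xs.map (inrE A B)) = _
      simp only [GDGA.dMList, ih, Finsupp.mapDomain_add, Finsupp.mapDomain_single,
        Finsupp.mapDomain_smul, mapDomain_comp', List.map_cons, inrE_fst, hent]
      erw [hent]

lemma chain_single (hA : A.IsDGA) (hB : B.IsDGA) (la : List A.Elt) (lb : List B.Elt) :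
    (A.wedge B).dB (concatMap A B (Finsupp.single (la, lb) (1:ℤ)))
      - concatMap A B (dTensor A B (Finsupp.single (la, lb) (1:ℤ)))
      ∈ (A.wedge B).Degenerate := by
  set La := la.map (inlE A B) with hLa
  set Lb := lb.map (inrE A B) with hLb
  have h1 : concatMap A B (Finsupp.single (la, lb) (1:ℤ))
      = Finsupp.single (La ++ Lb) (1:ℤ) := by
    simp only [concatMap]; exact lift_single _ _
  have h4 : ∀ v : A.Bar, concatMap A B (Finsupp.mapDomain (fun l => (l, lb)) v)
      = Finsupp.mapDomain (fun l : List A.Elt => l.map (inlE A B) ++ Lb) v := by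
    intro v
    simp only [concatMap]
    rw [lift_mapDomain]
    exact lift_eq_mapDomain _ v
  have h5 : ∀ w : B.Bar, concatMap A B (Finsupp.mapDomain (fun l => (la, l)) w)
      = Finsupp.mapDomain (fun l : List B.Elt => La ++ l.map (inrE A B)) w := by
    intro w
    simp only [concatMap]
    rw [lift_mapDomain]
    exact lift_eq_mapDomain _ w
  have hcross : ∀ x ∈ La, ∀ y ∈ Lb, ∀ (h : x.1 + 1 + (y.1 + 1) = x.1 + y.1 + 1 + 1),
      (A.wedge B).tr h ((A.wedge B).mul x.2 y.2) = 0 := by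
    intro x hx y hy h
    rw [hLa] at hx; rw [hLb] at hy
    obtain ⟨a, ha, rfl⟩ := List.mem_map.mp hx
    obtain ⟨b, hb, rfl⟩ := List.mem_map.mp hy
    show (A.wedge B).tr h
      ((A.mul a.2 (0 : A.R (b.1+1)), B.mul (0 : B.R (a.1+1)) b.2) : (A.wedge B).R _) = 0
    rw [mul_zero' hA, zero_mul' hB]
    exact tr_zero _ h
  have e1 : (A.wedge B).dRList (La ++ Lb)
      = Finsupp.mapDomain (fun l : List A.Elt => l.map (inlE A B) ++ Lb) (A.dRList la)
        + ((-1:ℤ) ^ A.sdeg la) •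
            Finsupp.mapDomain (fun l : List B.Elt => La ++ l.map (inrE A B)) (B.dRList lb) := by
    rw [dRList_append, hLa, hLb, dRList_inl A B hB, dRList_inr A B hA]
    simp only [sdeg_map_inl, mapDomain_comp']
  have e2 := dMList_append (A.wedge B) Lb La hcross
  rw [hLa, hLb, dMList_inl A B hA hB, dMList_inr A B hA hB] at e2
  simp only [sdeg_map_inl, mapDomain_comp'] at e2
  have h3 : concatMap A B (dTensor A B (Finsupp.single (la, lb) (1:ℤ)))
      = Finsupp.mapDomain (fun l : List A.Elt => l.map (inlE A B) ++ Lb) (A.dRList la)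
        + Finsupp.mapDomain (fun l : List A.Elt => l.map (inlE A B) ++ Lb) (A.dMList la)
        + ((-1:ℤ) ^ A.sdeg la) •
            (Finsupp.mapDomain (fun l : List B.Elt => La ++ l.map (inrE A B)) (B.dRList lb)
              + Finsupp.mapDomain (fun l : List B.Elt => La ++ l.map (inrE A B)) (B.dMList lb)) := by
    have ht : dTensor A B (Finsupp.single (la, lb) (1:ℤ))
        = Finsupp.mapDomain (fun l => (l, lb)) (A.dB (A.bar la))
          + ((-1:ℤ) ^ A.sdeg la) • Finsupp.mapDomain (fun l => (la, l)) (B.dB (B.bar lb)) := by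
      simp only [dTensor]; exact lift_single _ _
    have hda : A.dB (A.bar la) = A.dRList la + A.dMList la := dB_single A la
    have hdb : B.dB (B.bar lb) = B.dRList lb + B.dMList lb := dB_single B lb
    rw [ht, map_add, LinearMap.map_smul, h4, h5, hda, hdb, Finsupp.mapDomain_add,
      Finsupp.mapDomain_add]
  rw [h1, dB_single, h3]
  have hfin : (A.wedge B).dRList (La ++ Lb) + (A.wedge B).dMList (La ++ Lb)
      - (Finsupp.mapDomain (fun l : List A.Elt => l.map (inlE A B) ++ Lb) (A.dRList la)
        + Finsupp.mapDomain (fun l : List A.Elt => l.map (inlE A B) ++ Lb) (A.dMList la)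
        + ((-1:ℤ) ^ A.sdeg la) •
            (Finsupp.mapDomain (fun l : List B.Elt => La ++ l.map (inrE A B)) (B.dRList lb)
              + Finsupp.mapDomain (fun l : List B.Elt => La ++ l.map (inrE A B)) (B.dMList lb)))
      = (A.wedge B).dMList (La ++ Lb)
        - Finsupp.mapDomain (fun l : List A.Elt => l.map (inlE A B) ++ Lb) (A.dMList la)
        - ((-1:ℤ) ^ A.sdeg la) •
            Finsupp.mapDomain (fun l : List B.Elt => La ++ l.map (inrE A B)) (B.dMList lb) := by
    rw [e1]
    simp only [smul_add]
    abel
  rw [hfin]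
  exact e2

lemma inlE_injective : Function.Injective (inlE A B) := by
  rintro ⟨i, x⟩ ⟨j, y⟩ h
  simp only [inlE, Sigma.mk.inj_iff] at h
  replace h : i = j ∧ HEq ((x, 0) : A.R (i + 1) × B.R (i + 1)) ((y, 0) : A.R (j + 1) × B.R (j + 1)) :=
    Sigma.mk.inj_iff.mp h
  obtain ⟨rfl, h2⟩ := h
  rw [heq_iff_eq, Prod.mk.injEq] at h2
  rw [h2.1]

lemma inrE_injective : Function.Injective (inrE A B) := by
  rintro ⟨i, x⟩ ⟨j, y⟩ h
  simp only [inrE, Sigma.mk.inj_iff] at h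
  replace h : i = j ∧ HEq ((0, x) : A.R (i + 1) × B.R (i + 1)) ((0, y) : A.R (j + 1) × B.R (j + 1)) :=
    Sigma.mk.inj_iff.mp h
  obtain ⟨rfl, h2⟩ := h
  rw [heq_iff_eq, Prod.mk.injEq] at h2
  rw [h2.2]

lemma inl_ne_inr (a : A.Elt) (b : B.Elt) (hb : b.2 ≠ 0) : inlE A B a ≠ inrE A B b := by
  intro h
  obtain ⟨i, x⟩ := a
  obtain ⟨j, y⟩ := b
  simp only [inlE, inrE, Sigma.mk.inj_iff] at h
  replace h : i = j ∧ HEq ((x, 0) : A.R (i + 1) × B.R (i + 1)) ((0, y) : A.R (j + 1) × B.R (j + 1)) :=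
    Sigma.mk.inj_iff.mp h
  obtain ⟨rfl, h2⟩ := h
  rw [heq_iff_eq, Prod.mk.injEq] at h2
  exact hb h2.2.symm

lemma append_map_inj : ∀ (la la' : List A.Elt) (lb lb' : List B.Elt),
    (∀ y ∈ lb, y.2 ≠ 0) → (∀ y ∈ lb', y.2 ≠ 0) →
    la.map (inlE A B) ++ lb.map (inrE A B) = la'.map (inlE A B) ++ lb'.map (inrE A B) →
    la = la' ∧ lb = lb' := by
  intro la
  induction la with
  | nil =>
    intro la' lb lb' hb hb' h
    cases la' with
    | nil =>
      refine ⟨rfl, ?_⟩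
      exact List.map_injective_iff.mpr (inrE_injective A B) (by simpa using h)
    | cons a' t' =>
      exfalso
      cases lb with
      | nil => simp at h
      | cons b bs =>
        simp only [List.map_nil, List.nil_append, List.map_cons, List.cons_append,
          List.cons.injEq] at h
        exact inl_ne_inr A B a' b (hb b (by simp)) h.1.symm
  | cons a t ih =>
    intro la' lb lb' hb hb' h
    cases la' with
    | nil =>
      exfalso
      cases lb' with
      | nil => simp at h
      | cons b bs =>
        simp only [List.map_nil, List.nil_append, List.map_cons, List.cons_append,
          List.cons.injEq] at h
        exact inl_ne_inr A B a b (hb' b (by simp)) h.1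
    | cons a' t' =>
      simp only [List.map_cons, List.cons_append, List.cons.injEq] at h
      obtain ⟨h1, h2⟩ := h
      have hrest := ih t' lb lb' hb hb' h2
      have ha := inlE_injective A B h1
      exact ⟨by rw [ha, hrest.1], hrest.2⟩

lemma map_inl_eq_self (l : List (A.wedge B).Elt) (hl : ∀ x ∈ l, x.2.2 = 0) :
    l.map (fun x => inlE A B ⟨x.1, x.2.1⟩) = l := by
  induction l with
  | nil => rfl
  | cons x t iht =>
    rw [List.map_cons, iht (fun y hy => hl y (List.mem_cons_of_mem _ hy))]
    congr 1
    obtain ⟨i, u⟩ := x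
    have h0 : u.2 = 0 := hl ⟨i, u⟩ (by simp)
    show (⟨i, ((u.1, 0) : (A.wedge B).R (i + 1))⟩ : (A.wedge B).Elt) = ⟨i, u⟩
    rw [← h0]; rfl

lemma map_inr_eq_self (l : List (A.wedge B).Elt) (hl : ∀ x ∈ l, x.2.1 = 0) :
    l.map (fun x => inrE A B ⟨x.1, x.2.2⟩) = l := by
  induction l with
  | nil => rfl
  | cons x t iht =>
    rw [List.map_cons, iht (fun y hy => hl y (List.mem_cons_of_mem _ hy))]
    congr 1
    obtain ⟨i, u⟩ := x
    have h0 : u.1 = 0 := hl ⟨i, u⟩ (by simp)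
    show (⟨i, ((0, u.2) : (A.wedge B).R (i + 1))⟩ : (A.wedge B).Elt) = ⟨i, u⟩
    rw [← h0]; rfl

/-- The subcomplex of `B(S^n ∨ S^m)` in component-bigrading
`(1,1)` with the `S^n`-component occurring first is isomorphic as a chain
complex to the tensor product `B(S^n) ⊗ B(S^m)`: the concatenation map is a
chain map (modulo the multilinearity-degenerate monomials) and matches the
standard bases bijectively. -/
theorem bigrading_one_one_iso_tensor (hA : A.IsDGA) (hB : B.IsDGA) :
    -- `concatMap` is a chain map (modulo degenerate monomials)
    (∀ z, (A.wedge B).dB (concatMap A B z) - concatMap A B (dTensor A B z)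
        ∈ (A.wedge B).Degenerate)
    ∧
    -- it carries the basis of `B(S^n) ⊗ B(S^m)` (pairs of nonempty monomials with
    -- nonzero entries) bijectively onto the `(1,1)` monomials with the
    -- `S^n`-component first
    Set.BijOn (fun pr : List A.Elt × List B.Elt =>
        (pr.1.map (inlE A B)) ++ (pr.2.map (inrE A B)))
      {pr | pr.1 ≠ [] ∧ pr.2 ≠ [] ∧ (∀ x ∈ pr.1, x.2 ≠ 0) ∧ (∀ x ∈ pr.2, x.2 ≠ 0)}
      (AFirst11 A B) := by
  constructor
  · intro z
    induction z using Finsupp.induction_linear with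
    | zero => simp
    | add p q hp hq =>
      have hx : (A.wedge B).dB (concatMap A B (p + q)) - concatMap A B (dTensor A B (p + q))
          = ((A.wedge B).dB (concatMap A B p) - concatMap A B (dTensor A B p))
            + ((A.wedge B).dB (concatMap A B q) - concatMap A B (dTensor A B q)) := by
        simp only [map_add]
        abel
      rw [hx]
      exact Submodule.add_mem _ hp hq
    | single p b =>
      obtain ⟨la, lb⟩ := p
      rw [show (Finsupp.single (la, lb) b : (List A.Elt × List B.Elt) →₀ ℤ)
          = b • Finsupp.single (la, lb) (1:ℤ) from by rw [Finsupp.smul_single', mul_one]]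
      rw [LinearMap.map_smul, LinearMap.map_smul, LinearMap.map_smul, LinearMap.map_smul, ← smul_sub]
      exact Submodule.smul_mem _ _ (chain_single A B hA hB la lb)
  · refine ⟨?_, ?_, ?_⟩
    · rintro ⟨la, lb⟩ ⟨ha, hb, hA1, hB1⟩
      refine ⟨la.map (inlE A B), lb.map (inrE A B), rfl, by simpa using ha, by simpa using hb,
        ?_, ?_⟩
      · intro x hx
        obtain ⟨a, haa, rfl⟩ := List.mem_map.mp hx
        exact ⟨rfl, hA1 a haa⟩
      · intro x hx
        obtain ⟨b, hbb, rfl⟩ := List.mem_map.mp hx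
        exact ⟨rfl, hB1 b hbb⟩
    · rintro ⟨la, lb⟩ ⟨ha, hb, hA1, hB1⟩ ⟨la', lb'⟩ ⟨ha', hb', hA1', hB1'⟩ h
      obtain ⟨h1, h2⟩ := append_map_inj A B la la' lb lb' hB1 hB1' h
      rw [Prod.mk.injEq]
      exact ⟨h1, h2⟩
    · rintro l ⟨la', lb', rfl, hla, hlb, h1, h2⟩
      refine ⟨(la'.map (fun x => (⟨x.1, x.2.1⟩ : A.Elt)),
        lb'.map (fun x => (⟨x.1, x.2.2⟩ : B.Elt))), ⟨by simpa using hla, by simpa using hlb,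
        ?_, ?_⟩, ?_⟩
      · intro x hx
        obtain ⟨u, hu, rfl⟩ := List.mem_map.mp hx
        exact (h1 u hu).2
      · intro x hx
        obtain ⟨u, hu, rfl⟩ := List.mem_map.mp hx
        exact (h2 u hu).2
      · have e1 : (la'.map (fun x => (⟨x.1, x.2.1⟩ : A.Elt))).map (inlE A B) = la' := by
          rw [List.map_map]
          exact map_inl_eq_self A B la' (fun x hx => (h1 x hx).1)
        have e2 : (lb'.map (fun x => (⟨x.1, x.2.2⟩ : B.Elt))).map (inrE A B) = lb' := by
          rw [List.map_map]
          exact map_inr_eq_self A B lb' (fun x hx => (h2 x hx).1)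
        show (la'.map _).map (inlE A B) ++ (lb'.map _).map (inrE A B) = la' ++ lb'
        rw [e1, e2]


end Eleven
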